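/- arXiv:2108.00120 — 7 statements merged into one kernel-verified Lean document; each statement's English description precedes it below -/
import Mathlib

section
/- Let κ > 0 and let (q, ν) solve q' = −q² − κν, ν' = q(1−ν) with ν(t) < 1 on an interval. Define w = q/(1−ν) and v = 1/(1−ν). Then w' = κ(1−v) and v' = w; in particular the quantity w² + κ(1−v)² is constant in time. -/
/-!
Along the flow, `1 - ν` has derivative `-q (1 - ν)`, so the quotient rule gives
`(1/(1-ν))' = q/(1-ν)` and `(q/(1-ν))' = (-q² - κν + q²)/(1-ν) = κ (1 - 1/(1-ν))`: the Riccati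
terms cancel and `(w, v)` solves the linear system `w' = κ(1-v)`, `v' = w`. Its energy
`w² + κ(1-v)²` has derivative `2wκ(1-v) - 2κ(1-v)w = 0`, hence is constant on the interval.
-/

section Linearization

variable {κ : ℝ} {q ν : ℝ → ℝ} {t : ℝ}

theorem hasDerivAt_div_one_sub_of_riccati (hq : HasDerivAt q (-(q t) ^ 2 - κ * ν t) t)
    (hν : HasDerivAt ν (q t * (1 - ν t)) t) (hν1 : ν t ≠ 1) :
    HasDerivAt (fun s => q s / (1 - ν s)) (κ * (1 - 1 / (1 - ν t))) t := by
  have hne : 1 - ν t ≠ 0 := sub_ne_zero.mpr hν1.symm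
  refine (hq.div (hν.const_sub 1) hne).congr_deriv ?_
  field_simp
  ring

theorem hasDerivAt_one_div_one_sub_of_riccati (hν : HasDerivAt ν (q t * (1 - ν t)) t)
    (hν1 : ν t ≠ 1) :
    HasDerivAt (fun s => 1 / (1 - ν s)) (q t / (1 - ν t)) t := by
  have hne : 1 - ν t ≠ 0 := sub_ne_zero.mpr hν1.symm
  refine ((hasDerivAt_const t 1).div (hν.const_sub 1) hne).congr_deriv ?_
  field_simp
  ring

end Linearization

theorem hasDerivAt_oscillator_energy {κ : ℝ} {w v : ℝ → ℝ} {t : ℝ}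
    (hw : HasDerivAt w (κ * (1 - v t)) t) (hv : HasDerivAt v (w t) t) :
    HasDerivAt (fun s => w s ^ 2 + κ * (1 - v s) ^ 2) 0 t :=
  ((hw.pow 2).add (((hv.const_sub 1).pow 2).const_mul κ)).congr_deriv (by ring)

theorem IsOpen.oscillator_energy_eq {κ : ℝ} {w v : ℝ → ℝ} {s : Set ℝ} (hs : IsOpen s)
    (hs' : IsPreconnected s) (hw : ∀ t ∈ s, HasDerivAt w (κ * (1 - v t)) t)
    (hv : ∀ t ∈ s, HasDerivAt v (w t) t) {t₁ t₂ : ℝ} (ht₁ : t₁ ∈ s) (ht₂ : t₂ ∈ s) :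
    w t₁ ^ 2 + κ * (1 - v t₁) ^ 2 = w t₂ ^ 2 + κ * (1 - v t₂) ^ 2 := by
  have hE := fun t ht => hasDerivAt_oscillator_energy (hw t ht) (hv t ht)
  exact hs.is_const_of_deriv_eq_zero hs'
    (fun t ht => (hE t ht).differentiableAt.differentiableWithinAt) (fun t ht => (hE t ht).deriv)
    ht₁ ht₂

theorem stmt_5_general (κ : ℝ) (a b : ℝ) (q ν : ℝ → ℝ)
    (hq : ∀ t ∈ Set.Ioo a b, HasDerivAt q (-(q t)^2 - κ * ν t) t)
    (hν : ∀ t ∈ Set.Ioo a b, HasDerivAt ν (q t * (1 - ν t)) t)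
    (hν1 : ∀ t ∈ Set.Ioo a b, ν t < 1)
    (w v : ℝ → ℝ)
    (hw : ∀ t, w t = q t / (1 - ν t)) (hv : ∀ t, v t = 1 / (1 - ν t)) :
    (∀ t ∈ Set.Ioo a b, HasDerivAt w (κ * (1 - v t)) t ∧ HasDerivAt v (w t) t) ∧
    ∀ t₁ ∈ Set.Ioo a b, ∀ t₂ ∈ Set.Ioo a b,
      (w t₁)^2 + κ * (1 - v t₁)^2 = (w t₂)^2 + κ * (1 - v t₂)^2 := by
  obtain rfl : w = fun t => q t / (1 - ν t) := funext hw
  obtain rfl : v = fun t => 1 / (1 - ν t) := funext hv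
  have linear : ∀ t ∈ Set.Ioo a b, HasDerivAt (fun s => q s / (1 - ν s))
      (κ * (1 - 1 / (1 - ν t))) t ∧ HasDerivAt (fun s => 1 / (1 - ν s)) (q t / (1 - ν t)) t :=
    fun t ht => ⟨hasDerivAt_div_one_sub_of_riccati (hq t ht) (hν t ht) (hν1 t ht).ne,
      hasDerivAt_one_div_one_sub_of_riccati (hν t ht) (hν1 t ht).ne⟩
  exact ⟨linear, fun t₁ ht₁ t₂ ht₂ => isOpen_Ioo.oscillator_energy_eq isPreconnected_Ioo
    (fun t ht => (linear t ht).1) (fun t ht => (linear t ht).2) ht₁ ht₂⟩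

/-- The substitution `w = q/(1−ν)`, `v = 1/(1−ν)` linearizes the system:
`w' = κ(1−v)`, `v' = w`, and `w² + κ(1−v)²` is conserved. -/
theorem stmt_5 (κ : ℝ) (hκ : 0 < κ) (a b : ℝ) (q ν : ℝ → ℝ)
    (hq : ∀ t ∈ Set.Ioo a b, HasDerivAt q (-(q t)^2 - κ * ν t) t)
    (hν : ∀ t ∈ Set.Ioo a b, HasDerivAt ν (q t * (1 - ν t)) t)
    (hν1 : ∀ t ∈ Set.Ioo a b, ν t < 1)
    (w v : ℝ → ℝ)
    (hw : ∀ t, w t = q t / (1 - ν t)) (hv : ∀ t, v t = 1 / (1 - ν t)) :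
    (∀ t ∈ Set.Ioo a b, HasDerivAt w (κ * (1 - v t)) t ∧ HasDerivAt v (w t) t) ∧
    ∀ t₁ ∈ Set.Ioo a b, ∀ t₂ ∈ Set.Ioo a b,
      (w t₁)^2 + κ * (1 - v t₁)^2 = (w t₂)^2 + κ * (1 - v t₂)^2 :=
  stmt_5_general κ a b q ν hq hν hν1 w v hw hv
end

section
/- Let κ > 0, q₀ ∈ ℝ, ν₀ < 1. The solution of q' = −q² − κν, ν' = q(1−ν) with q(0)=q₀, ν(0)=ν₀ remains bounded for all t ≥ 0 if and only if |q₀| < √(κ(1 − 2ν₀)). -/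
/-!
Since `(1 - ν)' = -q (1 - ν)`, the factor `1 - ν` stays positive, and `x = ν / (1 - ν)`,
`y = q / (1 - ν)` solve the harmonic oscillator `x' = y`, `y' = -κ x`, whose energy
`E = y² + κ x²` is conserved. As `1 + x = 1 / (1 - ν)`, the solution is bounded exactly when `x`
stays away from `-1`. If `E < κ`, then `|x| ≤ √(E / κ) < 1`. If `E ≥ κ`, the explicit solution
`x = x₀ cos (√κ t) + (y₀ / √κ) sin (√κ t)` reaches `-√(E / κ) ≤ -1` in finite time, so `1 - ν`
would vanish. Finally `E < κ` is `q₀² < κ (1 - 2 ν₀)`.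
-/

open Real Set

theorem eq_of_hasDerivAt_zero_of_nonneg {f : ℝ → ℝ} (hf : ∀ t ≥ 0, HasDerivAt f 0 t)
    {t : ℝ} (ht : 0 ≤ t) : f t = f 0 :=
  constant_of_has_deriv_right_zero (fun s hs => (hf s hs.1).continuousAt.continuousWithinAt)
    (fun s hs => (hf s hs.1).hasDerivWithinAt) t ⟨ht, le_rfl⟩

theorem pos_of_hasDerivAt_mul_self {f a : ℝ → ℝ} (ha : ContinuousOn a (Ici 0))
    (hf : ∀ t ≥ 0, HasDerivAt f (a t * f t) t) (h0 : 0 < f 0) {t : ℝ} (ht : 0 ≤ t) :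
    0 < f t := by
  set a' : ℝ → ℝ := fun s => a (max s 0)
  have ha' : Continuous a' :=
    ha.comp_continuous (continuous_id.max continuous_const) fun s => le_max_right s 0
  set A : ℝ → ℝ := fun s => ∫ r in (0:ℝ)..s, a' r
  have hA : ∀ s, HasDerivAt A (a' s) s := fun s =>
    intervalIntegral.integral_hasDerivAt_right (ha'.intervalIntegrable _ _)
      (ha'.stronglyMeasurableAtFilter _ _) ha'.continuousAt
  -- integrating factor
  have hconst : f t * exp (-A t) = f 0 * exp (-A 0) := by
    refine eq_of_hasDerivAt_zero_of_nonneg (f := fun s => f s * exp (-A s)) (fun s hs => ?_) ht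
    refine ((hf s hs).mul (hA s).neg.exp).congr_deriv ?_
    simp only [a', max_eq_left hs]
    ring
  have : 0 < f t * exp (-A t) := by rw [hconst]; positivity
  exact pos_of_mul_pos_left this (exp_pos _).le

theorem exists_nonneg_cos_add_sin_eq_neg_sqrt (a b : ℝ) {ω : ℝ} (hω : 0 < ω) :
    ∃ t ≥ 0, a * cos (ω * t) + b * sin (ω * t) = -√(a ^ 2 + b ^ 2) := by
  set z : ℂ := ⟨a, b⟩
  have hz : ‖z‖ = √(a ^ 2 + b ^ 2) := by simp [Complex.norm_def, Complex.normSq_mk, z, sq]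
  refine ⟨(Complex.arg z + π) / ω, div_nonneg (by linarith [Complex.neg_pi_lt_arg z]) hω.le, ?_⟩
  have ha : ‖z‖ * cos z.arg = a := Complex.norm_mul_cos_arg z
  have hb : ‖z‖ * sin z.arg = b := Complex.norm_mul_sin_arg z
  rw [mul_div_cancel₀ _ hω.ne', ← hz, cos_add_pi, sin_add_pi, ← ha, ← hb]
  linear_combination -‖z‖ * sin_sq_add_cos_sq z.arg

section Oscillator

variable {κ : ℝ} {x y : ℝ → ℝ}

theorem oscillator_energy_eq (hx : ∀ t ≥ 0, HasDerivAt x (y t) t)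
    (hy : ∀ t ≥ 0, HasDerivAt y (-κ * x t) t) {t : ℝ} (ht : 0 ≤ t) :
    y t ^ 2 + κ * x t ^ 2 = y 0 ^ 2 + κ * x 0 ^ 2 := by
  refine eq_of_hasDerivAt_zero_of_nonneg (f := fun s => y s ^ 2 + κ * x s ^ 2)
    (fun s hs => ?_) ht
  refine (((hy s hs).pow 2).add (((hx s hs).pow 2).const_mul κ)).congr_deriv ?_
  push_cast
  ring

theorem oscillator_eq_cos_sin (hκ : 0 < κ) (hx : ∀ t ≥ 0, HasDerivAt x (y t) t)
    (hy : ∀ t ≥ 0, HasDerivAt y (-κ * x t) t) {t : ℝ} (ht : 0 ≤ t) :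
    x t = x 0 * cos (√κ * t) + y 0 / √κ * sin (√κ * t) := by
  set ω := √κ
  have hω : 0 < ω := sqrt_pos.mpr hκ
  have hω2 : ω ^ 2 = κ := sq_sqrt hκ.le
  set X : ℝ → ℝ := fun s => x 0 * cos (ω * s) + y 0 / ω * sin (ω * s)
  set Y : ℝ → ℝ := fun s => y 0 * cos (ω * s) - ω * x 0 * sin (ω * s)
  have hlin : ∀ s : ℝ, HasDerivAt (fun r => ω * r) ω s := fun s => by
    simpa using (hasDerivAt_id s).const_mul ω
  have hX : ∀ s, HasDerivAt X (Y s) s := fun s => by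
    refine (((hlin s).cos.const_mul (x 0)).add ((hlin s).sin.const_mul (y 0 / ω))).congr_deriv ?_
    field_simp
    ring
  have hY : ∀ s, HasDerivAt Y (-κ * X s) s := fun s => by
    refine (((hlin s).cos.const_mul (y 0)).sub ((hlin s).sin.const_mul (ω * x 0))).congr_deriv ?_
    simp only [X]
    rw [← hω2]
    field_simp
    ring
  -- the difference of two solutions is a solution starting from rest, so has zero energy
  have henergy := oscillator_energy_eq (κ := κ) (x := fun s => x s - X s) (y := fun s => y s - Y s)
    (fun s hs => (hx s hs).sub (hX s)) (fun s hs => ((hy s hs).sub (hY s)).congr_deriv (by ring)) ht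
  have hX0 : X 0 = x 0 := by simp [X]
  have hY0 : Y 0 = y 0 := by simp [Y]
  simp only [hX0, hY0, sub_self] at henergy
  have : (x t - X t) ^ 2 = 0 := by nlinarith [sq_nonneg (y t - Y t), sq_nonneg (x t - X t)]
  exact sub_eq_zero.mp (pow_eq_zero_iff two_ne_zero |>.mp this)

theorem oscillator_energy_lt_of_forall_gt_neg_one (hκ : 0 < κ)
    (hx : ∀ t ≥ 0, HasDerivAt x (y t) t) (hy : ∀ t ≥ 0, HasDerivAt y (-κ * x t) t)
    (hgt : ∀ t ≥ 0, -1 < x t) : y 0 ^ 2 + κ * x 0 ^ 2 < κ := by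
  have hω : 0 < √κ := sqrt_pos.mpr hκ
  obtain ⟨t, ht, hmin⟩ := exists_nonneg_cos_add_sin_eq_neg_sqrt (x 0) (y 0 / √κ) hω
  have hlt : √(x 0 ^ 2 + (y 0 / √κ) ^ 2) < 1 := by
    have := hgt t ht
    rw [oscillator_eq_cos_sin hκ hx hy ht, hmin] at this
    linarith
  rw [sqrt_lt' one_pos, one_pow, div_pow, sq_sqrt hκ.le] at hlt
  have := mul_lt_mul_of_pos_left hlt hκ
  field_simp at this
  linarith

theorem exists_forall_abs_le_of_oscillator_energy_lt (hκ : 0 < κ)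
    (hx : ∀ t ≥ 0, HasDerivAt x (y t) t) (hy : ∀ t ≥ 0, HasDerivAt y (-κ * x t) t)
    (hE : y 0 ^ 2 + κ * x 0 ^ 2 < κ) :
    ∃ r < 1, ∀ t ≥ 0, |x t| ≤ r ∧ |y t| ≤ √κ := by
  set E := y 0 ^ 2 + κ * x 0 ^ 2
  refine ⟨√(E / κ), by rwa [sqrt_lt' one_pos, one_pow, div_lt_one hκ], fun t ht => ?_⟩
  have hEt := oscillator_energy_eq hx hy ht
  constructor
  · rw [← sqrt_sq_eq_abs]
    refine sqrt_le_sqrt ?_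
    rw [le_div_iff₀ hκ]
    nlinarith [sq_nonneg (y t)]
  · rw [← sqrt_sq_eq_abs]
    refine sqrt_le_sqrt ?_
    nlinarith [sq_nonneg (x t)]

end Oscillator

theorem abs_div_one_add_le {x y r c : ℝ} (hr : r < 1) (hx : |x| ≤ r) (hy : |y| ≤ c) :
    |y / (1 + x)| ≤ c / (1 - r) := by
  have hx' : 1 - r ≤ 1 + x := by linarith [neg_abs_le x]
  rw [abs_div, abs_of_pos (a := 1 + x) (by linarith)]
  exact div_le_div₀ ((abs_nonneg y).trans hy) hy (by linarith) hx'

section EulerMongeAmpere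

variable {κ : ℝ} {q ν : ℝ → ℝ} {t : ℝ}

theorem hasDerivAt_div_one_sub (hν : HasDerivAt ν (q t * (1 - ν t)) t) (h : 1 - ν t ≠ 0) :
    HasDerivAt (fun s => ν s / (1 - ν s)) (q t / (1 - ν t)) t := by
  refine (hν.div (hν.const_sub 1) h).congr_deriv ?_
  field_simp
  ring

theorem hasDerivAt_q_div_one_sub (hq : HasDerivAt q (-(q t) ^ 2 - κ * ν t) t)
    (hν : HasDerivAt ν (q t * (1 - ν t)) t) (h : 1 - ν t ≠ 0) :
    HasDerivAt (fun s => q s / (1 - ν s)) (-κ * (ν t / (1 - ν t))) t := by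
  refine (hq.div (hν.const_sub 1) h).congr_deriv ?_
  field_simp
  ring

theorem energy_lt_iff_abs_lt_sqrt {q₀ ν₀ : ℝ} (hν₀ : ν₀ < 1) :
    (q₀ / (1 - ν₀)) ^ 2 + κ * (ν₀ / (1 - ν₀)) ^ 2 < κ ↔ |q₀| < √(κ * (1 - 2 * ν₀)) := by
  have h : 0 < (1 - ν₀) ^ 2 := by nlinarith
  rw [lt_sqrt (abs_nonneg q₀), sq_abs, div_pow, div_pow, mul_div_assoc', ← add_div,
    div_lt_iff₀ h]
  constructor <;> intro <;> linarith

end EulerMongeAmpere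

/-- Sharp critical threshold: the solution of `q' = −q² − κν`, `ν' = q(1−ν)` with
`ν₀ < 1` remains bounded for all `t ≥ 0` iff `|q₀| < √(κ(1 − 2ν₀))`. -/
theorem stmt_7 (κ q₀ ν₀ : ℝ) (hκ : 0 < κ) (hν₀ : ν₀ < 1) (q ν : ℝ → ℝ)
    (hq : ∀ t ≥ (0:ℝ), HasDerivAt q (-(q t)^2 - κ * ν t) t)
    (hν : ∀ t ≥ (0:ℝ), HasDerivAt ν (q t * (1 - ν t)) t)
    (hq0 : q 0 = q₀) (hν0 : ν 0 = ν₀) :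
    (∃ M : ℝ, ∀ t ≥ (0:ℝ), |q t| ≤ M ∧ |ν t| ≤ M) ↔
      |q₀| < Real.sqrt (κ * (1 - 2 * ν₀)) := by
  have hpos : ∀ t ≥ 0, 0 < 1 - ν t := fun t ht =>
    pos_of_hasDerivAt_mul_self (a := fun s => -q s)
      (fun s hs => (hq s hs).continuousAt.continuousWithinAt.neg)
      (fun s hs => ((hν s hs).const_sub 1).congr_deriv (by ring)) (by linarith) ht
  set x := fun s => ν s / (1 - ν s)
  set y := fun s => q s / (1 - ν s)
  have hx : ∀ t ≥ 0, HasDerivAt x (y t) t := fun t ht =>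
    hasDerivAt_div_one_sub (hν t ht) (hpos t ht).ne'
  have hy : ∀ t ≥ 0, HasDerivAt y (-κ * x t) t := fun t ht =>
    hasDerivAt_q_div_one_sub (hq t ht) (hν t ht) (hpos t ht).ne'
  have hone_add : ∀ t ≥ 0, 1 + x t = 1 / (1 - ν t) := fun t ht => by
    simp only [x]
    field_simp [(hpos t ht).ne']
    ring
  rw [← energy_lt_iff_abs_lt_sqrt hν₀, ← hq0, ← hν0]
  constructor
  · rintro -
    exact oscillator_energy_lt_of_forall_gt_neg_one hκ hx hy fun t ht => by
      linarith [hone_add t ht, one_div_pos.mpr (hpos t ht)]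
  · intro hE
    obtain ⟨r, hr, hbound⟩ := exists_forall_abs_le_of_oscillator_energy_lt hκ hx hy hE
    refine ⟨max (√κ / (1 - r)) (r / (1 - r)), fun t ht => ?_⟩
    obtain ⟨hxt, hyt⟩ := hbound t ht
    have hqt : q t = y t / (1 + x t) := by
      rw [hone_add t ht]; simp only [y]; field_simp [(hpos t ht).ne']
    have hνt : ν t = x t / (1 + x t) := by
      rw [hone_add t ht]; simp only [x]; field_simp [(hpos t ht).ne']
    rw [hqt, hνt]
    exact ⟨(abs_div_one_add_le hr hxt hyt).trans (le_max_left _ _),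
      (abs_div_one_add_le hr hxt hxt).trans (le_max_right _ _)⟩
end

section
/- Let κ > 0 and λᵤ, λ_φ ∈ ℝ. The function g(t) = (1 − λ_φ) + λ_φ cos(√κ t) + λᵤ sin(√κ t)/√κ satisfies g(t) > 0 for all t ∈ ℝ if and only if λᵤ² < κ(1 − 2λ_φ). -/
/-- `g(t) = (1−lphi) + lphi cos(√κ t) + λᵤ sin(√κ t)/√κ` is positive for every `t`
iff `λᵤ² < κ(1 − 2lphi)`. -/
theorem stmt_12 (κ lu lphi : ℝ) (hκ : 0 < κ) :
    (∀ t : ℝ, 0 < (1 - lphi) + lphi * Real.cos (Real.sqrt κ * t)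
        + lu * Real.sin (Real.sqrt κ * t) / Real.sqrt κ) ↔
      lu^2 < κ * (1 - 2 * lphi) := by
  set s := Real.sqrt κ with hs
  have hs0 : 0 < s := Real.sqrt_pos.mpr hκ
  have hs2 : s ^ 2 = κ := Real.sq_sqrt hκ.le
  set A := lphi
  set B := lu / s with hB
  have hB2 : B ^ 2 = lu ^ 2 / κ := by
    rw [hB, div_pow, hs2]
  constructor
  · intro h
    set r := Real.sqrt (A ^ 2 + B ^ 2) with hr
    have hr0 : 0 ≤ r := Real.sqrt_nonneg _
    have hr2 : r ^ 2 = A ^ 2 + B ^ 2 := Real.sq_sqrt (by positivity)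
    -- find θ with cos θ = -A/r, sin θ = -B/r (when r > 0)
    have key : r < 1 - A := by
      rcases eq_or_lt_of_le hr0 with hre | hrp
      · have h0 := h 0
        simp at h0
        nlinarith [hr2]
      · have hc1 : -A / r ∈ Set.Icc (-1 : ℝ) 1 := by
          constructor
          · rw [le_div_iff₀ hrp]
            nlinarith [hr2, sq_nonneg B]
          · rw [div_le_iff₀ hrp]
            nlinarith [hr2, sq_nonneg B]
        set θ0 := Real.arccos (-A / r) with hθ0def
        have hθ0 : Real.cos θ0 = -A / r := Real.cos_arccos hc1.1 hc1.2
        have hsin0 : Real.sin θ0 = Real.sqrt (1 - (-A / r) ^ 2) := by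
          rw [hθ0def]; exact Real.sin_arccos _
        have hsinabs : Real.sin θ0 = |B| / r := by
          rw [hsin0]
          rw [show 1 - (-A / r) ^ 2 = B ^ 2 / r ^ 2 by
            field_simp
            nlinarith [hr2]]
          rw [Real.sqrt_div (sq_nonneg B), Real.sqrt_sq_eq_abs,
            Real.sqrt_sq hrp.le]
        set θ : ℝ := if B ≤ 0 then θ0 else -θ0 with hθ
        have hcos : Real.cos θ = -A / r := by
          rw [hθ]; split_ifs <;> simp [hθ0]
        have hsin : Real.sin θ = -B / r := by
          rw [hθ]; split_ifs with hb
          · rw [hsinabs, abs_of_nonpos hb]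
          · rw [Real.sin_neg, hsinabs, abs_of_pos (lt_of_not_ge hb)]
            ring
        have ht := h (θ / s)
        rw [mul_div_cancel₀ _ hs0.ne'] at ht
        have : lu * Real.sin θ / s = B * Real.sin θ := by
          rw [hB]; ring
        rw [this, hcos, hsin] at ht
        have hmin : A * (-A / r) + B * (-B / r) = -r := by
          have e : A * (-A / r) + B * (-B / r) = -(A ^ 2 + B ^ 2) / r := by
            ring
          rw [e, ← hr2]
          field_simp
        linarith [ht, hmin]
    have hA1 : 0 < 1 - A := lt_of_le_of_lt hr0 key
    have : A ^ 2 + B ^ 2 < (1 - A) ^ 2 := by nlinarith [hr2]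
    rw [hB2] at this
    rw [show κ * (1 - 2 * lphi) = κ * ((1 - A) ^ 2 - A ^ 2) by ring]
    calc lu ^ 2 = κ * (lu ^ 2 / κ) := by field_simp
    _ < κ * ((1 - A) ^ 2 - A ^ 2) := by
        apply mul_lt_mul_of_pos_left _ hκ
        linarith
  · intro h t
    have hBlt : A ^ 2 + B ^ 2 < (1 - A) ^ 2 := by
      rw [hB2]
      have : lu ^ 2 / κ < 1 - 2 * lphi := by
        rw [div_lt_iff₀ hκ]; linarith [h]
      nlinarith
    have hA1 : 0 < 1 - A := by nlinarith [sq_nonneg A, sq_nonneg B, sq_nonneg (1 - A)]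
    set θ := s * t
    have hlb : A * Real.cos θ + B * Real.sin θ ≥ -Real.sqrt (A ^ 2 + B ^ 2) := by
      have h1 : (A * Real.cos θ + B * Real.sin θ) ^ 2 ≤ A ^ 2 + B ^ 2 := by
        nlinarith [sq_nonneg (A * Real.sin θ - B * Real.cos θ),
          Real.sin_sq_add_cos_sq θ]
      nlinarith [Real.sq_sqrt (show (0:ℝ) ≤ A ^ 2 + B ^ 2 by positivity),
        Real.sqrt_nonneg (A ^ 2 + B ^ 2),
        sq_nonneg (A * Real.cos θ + B * Real.sin θ + Real.sqrt (A ^ 2 + B ^ 2))]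
    have hrlt : Real.sqrt (A ^ 2 + B ^ 2) < 1 - A := by
      have := Real.sqrt_lt_sqrt (by positivity) hBlt
      rwa [Real.sqrt_sq hA1.le] at this
    have : lu * Real.sin θ / s = B * Real.sin θ := by rw [hB]; ring
    rw [this]
    linarith [hlb, hrlt]
end

section
/- Let κ > 0, C₀ ≠ 0, and let (w,v) solve w' = κ(1−v) + C₀² v⁻³, v' = w on a maximal interval with v(0) > 0. Then the quantity w² + κ(1−v)² + C₀²v⁻² is conserved, and consequently v(t) stays bounded above and bounded away from 0, and w(t) is bounded, for all t ≥ 0. -/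
/-!
Along the flow, `E = w² + κ(1 - v)² + C₀²v⁻²` has derivative zero as long as `v > 0`, so it is
conserved. Conservation gives `C₀²v⁻² ≤ E(0)`, i.e. `v ≥ |C₀| / √E(0) > 0` while `v` stays
positive, and a continuity argument shows that `v` therefore never reaches `0`. With `v > 0` for
all time, `κ(1 - v)² ≤ E(0)` and `w² ≤ E(0)` bound `v` above and `w` in absolute value.
-/

open Set

noncomputable def swirlEnergy (κ C₀ w v : ℝ) : ℝ := w ^ 2 + κ * (1 - v) ^ 2 + C₀ ^ 2 / v ^ 2

section Bounds

variable {κ C₀ w v E : ℝ}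

theorem swirlEnergy_pos (hκ : 0 ≤ κ) (hC₀ : C₀ ≠ 0) (hv : v ≠ 0) : 0 < swirlEnergy κ C₀ w v := by
  unfold swirlEnergy
  positivity

theorem div_sqrt_le_of_swirlEnergy_le (hκ : 0 ≤ κ) (hv : 0 < v) (hE : swirlEnergy κ C₀ w v ≤ E) :
    |C₀| / √E ≤ v := by
  have hC₀v : C₀ ^ 2 ≤ E * v ^ 2 := by
    have : C₀ ^ 2 / v ^ 2 ≤ E := by
      unfold swirlEnergy at hE
      nlinarith [sq_nonneg w, mul_nonneg hκ (sq_nonneg (1 - v))]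
    rwa [div_le_iff₀ (by positivity)] at this
  refine div_le_of_le_mul₀ (Real.sqrt_nonneg E) hv.le ?_
  calc |C₀| = √(C₀ ^ 2) := (Real.sqrt_sq_eq_abs C₀).symm
    _ ≤ √(E * v ^ 2) := Real.sqrt_le_sqrt hC₀v
    _ = v * √E := by rw [Real.sqrt_mul' E (sq_nonneg v), Real.sqrt_sq hv.le, mul_comm]

theorem le_one_add_sqrt_of_swirlEnergy_le (hκ : 0 < κ) (hE : swirlEnergy κ C₀ w v ≤ E) :
    v ≤ 1 + √(E / κ) := by
  have h : (1 - v) ^ 2 ≤ E / κ := by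
    rw [le_div_iff₀ hκ]
    unfold swirlEnergy at hE
    nlinarith [sq_nonneg w, div_nonneg (sq_nonneg C₀) (sq_nonneg v)]
  linarith [neg_abs_le (1 - v), Real.abs_le_sqrt h]

theorem abs_le_sqrt_of_swirlEnergy_le (hκ : 0 ≤ κ) (hE : swirlEnergy κ C₀ w v ≤ E) :
    |w| ≤ √E := by
  refine Real.abs_le_sqrt ?_
  unfold swirlEnergy at hE
  nlinarith [mul_nonneg hκ (sq_nonneg (1 - v)), div_nonneg (sq_nonneg C₀) (sq_nonneg v)]

end Bounds

section Conservation

variable {κ C₀ : ℝ} {w v : ℝ → ℝ}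

theorem hasDerivAt_swirlEnergy {t : ℝ}
    (hw : HasDerivAt w (κ * (1 - v t) + C₀ ^ 2 / v t ^ 3) t) (hv : HasDerivAt v (w t) t)
    (hvt : v t ≠ 0) : HasDerivAt (fun s ↦ swirlEnergy κ C₀ (w s) (v s)) 0 t := by
  have h := ((hw.pow 2).add (((hasDerivAt_const t 1).sub hv).pow 2 |>.const_mul κ)).add
    ((hasDerivAt_const t (C₀ ^ 2)).div (hv.pow 2) (pow_ne_zero 2 hvt))
  refine h.congr_deriv ?_
  simp only [Pi.sub_apply, Pi.pow_apply]
  field_simp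
  ring

theorem swirlEnergy_eq_of_forall_pos {a b : ℝ} (hab : a ≤ b)
    (hw : ∀ t ∈ Icc a b, HasDerivAt w (κ * (1 - v t) + C₀ ^ 2 / v t ^ 3) t)
    (hv : ∀ t ∈ Icc a b, HasDerivAt v (w t) t) (hpos : ∀ t ∈ Icc a b, 0 < v t) :
    swirlEnergy κ C₀ (w b) (v b) = swirlEnergy κ C₀ (w a) (v a) := by
  have hE : ∀ t ∈ Icc a b, HasDerivAt (fun s ↦ swirlEnergy κ C₀ (w s) (v s)) 0 t := fun t ht ↦
    hasDerivAt_swirlEnergy (hw t ht) (hv t ht) (hpos t ht).ne'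
  exact constant_of_has_deriv_right_zero
    (fun t ht ↦ (hE t ht).continuousAt.continuousWithinAt)
    (fun t ht ↦ (hE t (Ico_subset_Icc_self ht)).hasDerivWithinAt) b (right_mem_Icc.2 hab)

end Conservation

theorem ContinuousOn.le_of_le_while_pos {f : ℝ → ℝ} {a m : ℝ} (hf : ContinuousOn f (Ici a))
    (hm : 0 < m) (ha : 0 < f a) (H : ∀ t ≥ a, (∀ s ∈ Icc a t, 0 < f s) → m ≤ f t) :
    ∀ t ≥ a, m ≤ f t := by
  suffices hpos : ∀ t ≥ a, 0 < f t from fun t ht ↦ H t ht fun s hs ↦ hpos s hs.1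
  by_contra! ⟨t₀, ht₀, hft₀⟩
  set Z := Icc a t₀ ∩ f ⁻¹' Iic 0
  have hZ : IsClosed Z :=
    (hf.mono Icc_subset_Ici_self).preimage_isClosed_of_isClosed isClosed_Icc isClosed_Iic
  have hZne : Z.Nonempty := ⟨t₀, ⟨ht₀, le_rfl⟩, hft₀⟩
  have hZbdd : BddBelow Z := ⟨a, fun t ht ↦ ht.1.1⟩
  -- `c` is the first zero of `f` after `a`; continuity from the left forces `f c ≥ m`.
  obtain ⟨⟨hac, hct₀⟩, hfc⟩ := hZ.csInf_mem hZne hZbdd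
  set c := sInf Z
  have hbefore : ∀ s ∈ Ico a c, 0 < f s := fun s hs ↦ by
    by_contra! hfs
    exact (csInf_le hZbdd ⟨⟨hs.1, hs.2.le.trans hct₀⟩, hfs⟩).not_gt hs.2
  have hac' : a < c := hac.lt_of_ne fun h ↦ (h ▸ hfc : f a ≤ 0).not_gt ha
  have hmc : m ≤ f c :=
    ContinuousWithinAt.closure_le (by rw [closure_Ico hac'.ne]; exact right_mem_Icc.2 hac)
      continuousWithinAt_const
      ((hf c (mem_Ici.2 hac)).mono fun s hs ↦ mem_Ici.2 hs.1)
      fun s (hs : s ∈ Ico a c) ↦ H s hs.1 fun u hu ↦ hbefore u ⟨hu.1, hu.2.trans_lt hs.2⟩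
  exact hm.not_ge (hmc.trans hfc)

/-- For `w' = κ(1−v) + C₀²v⁻³`, `v' = w` with `v(0) > 0` and `C₀ ≠ 0`: the energy
`w² + κ(1−v)² + C₀²v⁻²` is conserved, and `v` stays bounded above and away from `0`,
and `w` stays bounded, for all `t ≥ 0`. -/
theorem stmt_14 (κ C₀ : ℝ) (hκ : 0 < κ) (hC₀ : C₀ ≠ 0) (w v : ℝ → ℝ)
    (hv0 : 0 < v 0)
    (hw : ∀ t ≥ (0:ℝ), HasDerivAt w (κ * (1 - v t) + C₀^2 / (v t)^3) t)
    (hv : ∀ t ≥ (0:ℝ), HasDerivAt v (w t) t) :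
    (∀ t ≥ (0:ℝ), (w t)^2 + κ * (1 - v t)^2 + C₀^2 / (v t)^2
        = (w 0)^2 + κ * (1 - v 0)^2 + C₀^2 / (v 0)^2) ∧
    ∃ m M W : ℝ, 0 < m ∧ ∀ t ≥ (0:ℝ), m ≤ v t ∧ v t ≤ M ∧ |w t| ≤ W := by
  set E₀ := swirlEnergy κ C₀ (w 0) (v 0)
  have hcons : ∀ t ≥ (0:ℝ), (∀ s ∈ Icc 0 t, 0 < v s) → swirlEnergy κ C₀ (w t) (v t) = E₀ :=
    fun t ht hpos ↦ swirlEnergy_eq_of_forall_pos ht (fun s hs ↦ hw s hs.1)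
      (fun s hs ↦ hv s hs.1) hpos
  have hm : 0 < |C₀| / √E₀ :=
    div_pos (abs_pos.2 hC₀) (Real.sqrt_pos.2 (swirlEnergy_pos hκ.le hC₀ hv0.ne'))
  have hlow : ∀ t ≥ (0:ℝ), |C₀| / √E₀ ≤ v t :=
    ContinuousOn.le_of_le_while_pos (fun t ht ↦ (hv t ht).continuousAt.continuousWithinAt) hm hv0
      fun t ht hpos ↦ div_sqrt_le_of_swirlEnergy_le hκ.le (hpos t ⟨ht, le_rfl⟩) (hcons t ht hpos).le
  have hconsAll : ∀ t ≥ (0:ℝ), swirlEnergy κ C₀ (w t) (v t) = E₀ :=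
    fun t ht ↦ hcons t ht fun s hs ↦ hm.trans_le (hlow s hs.1)
  refine ⟨hconsAll, |C₀| / √E₀, 1 + √(E₀ / κ), √E₀, hm, fun t ht ↦ ⟨hlow t ht, ?_, ?_⟩⟩
  · exact le_one_add_sqrt_of_swirlEnergy_le hκ (hconsAll t ht).le
  · exact abs_le_sqrt_of_swirlEnergy_le hκ.le (hconsAll t ht).le
end

section
/- Let κ > 0 and consider the system q' = −q² − κν + Θ̃², ν' = q(1−ν), Θ̃' = −2qΘ̃ with initial data ν(0) < 1 and Θ̃(0) ≠ 0. Then the solution (q, ν, Θ̃) exists and remains bounded for all t ≥ 0. -/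
/-!
Along the flow, `F = q² + κν² + Θ̃²` satisfies `F' = -2qF`, the same linear equation
as `Θ̃`. Hence `F = cΘ̃` with `c = F(0)/Θ̃(0)` by uniqueness for linear ODEs.
Then `Θ̃² ≤ F = cΘ̃` traps `Θ̃` between `0` and `c`, so `F ≤ c²`, and since `κ > 0`
every component is bounded in terms of `F`.
-/

open Set

theorem eq_zero_of_hasDerivAt_eq_smul_self {E : Type*} [NormedAddCommGroup E] [NormedSpace ℝ E]
    {a : ℝ → ℝ} {y : ℝ → E} {t₀ : ℝ} (ha : ContinuousOn a (Ici t₀))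
    (hy : ∀ t ≥ t₀, HasDerivAt y (a t • y t) t) (hy₀ : y t₀ = 0) :
    ∀ t ≥ t₀, y t = 0 := by
  intro t ht
  obtain ⟨K, hK⟩ :=
    (isCompact_Icc (a := t₀) (b := t)).exists_bound_of_continuousOn (ha.mono Icc_subset_Ici_self)
  refine eq_zero_of_abs_deriv_le_mul_abs_self_of_eq_zero_right (K := K)
    (fun s hs => (hy s hs.1).continuousAt.continuousWithinAt)
    (fun s hs => (hy s hs.1).hasDerivWithinAt) hy₀ (fun s hs => ?_) t ⟨ht, le_rfl⟩
  rw [norm_smul]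
  exact mul_le_mul_of_nonneg_right (hK s (Ico_subset_Icc_self hs)) (norm_nonneg _)

theorem mul_eq_mul_of_hasDerivAt_eq_mul_self {a y z : ℝ → ℝ} {t₀ : ℝ}
    (ha : ContinuousOn a (Ici t₀))
    (hy : ∀ t ≥ t₀, HasDerivAt y (a t * y t) t) (hz : ∀ t ≥ t₀, HasDerivAt z (a t * z t) t) :
    ∀ t ≥ t₀, y t * z t₀ = y t₀ * z t := by
  have hw : ∀ t ≥ t₀, HasDerivAt (fun s => y s * z t₀ - y t₀ * z s)
      (a t • (y t * z t₀ - y t₀ * z t)) t := fun t ht =>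
    (((hy t ht).mul_const _).sub ((hz t ht).const_mul _)).congr_deriv
      (by rw [smul_eq_mul]; ring)
  intro t ht
  exact sub_eq_zero.mp (eq_zero_of_hasDerivAt_eq_smul_self ha hw (sub_self _) t ht)

theorem hasDerivAt_energy {κ : ℝ} {q ν Θ : ℝ → ℝ} {t : ℝ}
    (hq : HasDerivAt q (-(q t)^2 - κ * ν t + (Θ t)^2) t)
    (hν : HasDerivAt ν (q t * (1 - ν t)) t)
    (hΘ : HasDerivAt Θ (-2 * q t * Θ t) t) :
    HasDerivAt (fun s => (q s)^2 + κ * (ν s)^2 + (Θ s)^2)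
      (-2 * q t * ((q t)^2 + κ * (ν t)^2 + (Θ t)^2)) t :=
  (((hq.pow 2).add ((hν.pow 2).const_mul κ)).add (hΘ.pow 2)).congr_deriv (by push_cast; ring)

theorem le_sq_of_sq_le_of_eq_mul {R : Type*} [CommRing R] [LinearOrder R] [IsStrictOrderedRing R]
    {F x c : R} (hx : x ^ 2 ≤ F) (hF : F = c * x) : F ≤ c ^ 2 := by
  nlinarith [sq_nonneg (c - x)]

theorem stmt_15_general (κ : ℝ) (hκ : 0 < κ) (q ν Θ : ℝ → ℝ)
    (hq : ∀ t ≥ (0:ℝ), HasDerivAt q (-(q t)^2 - κ * ν t + (Θ t)^2) t)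
    (hν : ∀ t ≥ (0:ℝ), HasDerivAt ν (q t * (1 - ν t)) t)
    (hΘ : ∀ t ≥ (0:ℝ), HasDerivAt Θ (-2 * q t * Θ t) t)
    (hΘ0 : Θ 0 ≠ 0) :
    ∃ M : ℝ, ∀ t ≥ (0:ℝ), |q t| ≤ M ∧ |ν t| ≤ M ∧ |Θ t| ≤ M := by
  set F : ℝ → ℝ := fun s => (q s)^2 + κ * (ν s)^2 + (Θ s)^2
  set c := F 0 / Θ 0
  have hqc : ContinuousOn (fun s => -2 * q s) (Ici 0) := fun t ht =>
    ((hq t ht).continuousAt.const_mul _).continuousWithinAt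
  have hFΘ : ∀ t ≥ (0:ℝ), F t = c * Θ t := fun t ht => by
    have h := mul_eq_mul_of_hasDerivAt_eq_mul_self hqc
      (fun s hs => hasDerivAt_energy (hq s hs) (hν s hs) (hΘ s hs)) hΘ t ht
    rw [div_mul_eq_mul_div, eq_div_iff hΘ0]
    exact h
  refine ⟨√(c ^ 2 + c ^ 2 / κ), fun t ht => ?_⟩
  have hκν : 0 ≤ κ * (ν t)^2 := mul_nonneg hκ.le (sq_nonneg _)
  have hFc : F t ≤ c ^ 2 :=
    le_sq_of_sq_le_of_eq_mul (le_add_of_nonneg_left (add_nonneg (sq_nonneg _) hκν)) (hFΘ t ht)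
  have hνc : (ν t)^2 ≤ c ^ 2 / κ :=
    (le_div_iff₀' hκ).mpr (by linarith [sq_nonneg (q t), sq_nonneg (Θ t)])
  have hc : 0 ≤ c ^ 2 / κ := by positivity
  refine ⟨Real.abs_le_sqrt ?_, Real.abs_le_sqrt ?_, Real.abs_le_sqrt ?_⟩
  · linarith [sq_nonneg (Θ t)]
  · linarith [sq_nonneg c]
  · linarith [sq_nonneg (q t)]

/-- Rotation prevents blowup: for `q' = −q² − κν + Θ̃²`, `ν' = q(1−ν)`, `Θ̃' = −2qΘ̃`
with `ν(0) < 1` and `Θ̃(0) ≠ 0`, the solution remains bounded for all `t ≥ 0`. -/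
theorem stmt_15 (κ : ℝ) (hκ : 0 < κ) (q ν Θ : ℝ → ℝ)
    (hq : ∀ t ≥ (0:ℝ), HasDerivAt q (-(q t)^2 - κ * ν t + (Θ t)^2) t)
    (hν : ∀ t ≥ (0:ℝ), HasDerivAt ν (q t * (1 - ν t)) t)
    (hΘ : ∀ t ≥ (0:ℝ), HasDerivAt Θ (-2 * q t * Θ t) t)
    (hν0 : ν 0 < 1) (hΘ0 : Θ 0 ≠ 0) :
    ∃ M : ℝ, ∀ t ≥ (0:ℝ), |q t| ≤ M ∧ |ν t| ≤ M ∧ |Θ t| ≤ M :=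
  stmt_15_general κ hκ q ν Θ hq hν hΘ hΘ0
end

section
/- Let κ > 0 and suppose p₀, μ₀ satisfy |p₀| < √(κ(1−2μ₀)) and q₀, ν₀ satisfy |q₀| < √(κ(1−2ν₀)). Along a solution of p' = −p² − κμ, μ' = p(1−μ), q' = −q² − κν, ν' = q(1−ν), with ρ := (1−μ)(1−ν)^{n−1}, the quantity ρ(t) remains bounded above uniformly in time: ρ(t) ≤ M(p₀,q₀,μ₀,ν₀,κ,n) for an explicit constant M. -/
/-- Key one-pair lemma: under the subcritical threshold, `|1 - y t|` is uniformly bounded. -/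
lemma key_bound (κ x₀ y₀ : ℝ) (hκ : 0 < κ)
    (hx : |x₀| < Real.sqrt (κ * (1 - 2 * y₀)))
    (x y : ℝ → ℝ)
    (hdx : ∀ t ≥ (0:ℝ), HasDerivAt x (-(x t)^2 - κ * y t) t)
    (hdy : ∀ t ≥ (0:ℝ), HasDerivAt y (x t * (1 - y t)) t)
    (hx0 : x 0 = x₀) (hy0 : y 0 = y₀) :
    ∃ M : ℝ, 0 ≤ M ∧ ∀ t ≥ (0:ℝ), |1 - y t| ≤ M := by
  -- subcritical condition in squared form
  have hpos : 0 < κ * (1 - 2 * y₀) := by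
    by_contra h
    push_neg at h
    rw [Real.sqrt_eq_zero'.mpr h] at hx
    exact absurd hx (not_lt.mpr (abs_nonneg _))
  have hx2 : x₀ ^ 2 < κ * (1 - 2 * y₀) := by
    have := (Real.lt_sqrt (abs_nonneg x₀)).mp hx
    rwa [sq_abs] at this
  set a : ℝ := (1 - y₀) ^ 2 with ha
  set c : ℝ := x₀ ^ 2 + κ * y₀ ^ 2 with hc
  have hca : c < κ * a := by
    have : κ * a - c = κ * (1 - 2 * y₀) - x₀ ^ 2 := by rw [ha, hc]; ring
    nlinarith
  have hc0 : 0 ≤ c := by positivity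
  have hd : 0 < κ * a - c := by linarith
  -- the conserved quantity
  set F : ℝ → ℝ := fun t => a * ((x t) ^ 2 + κ * (y t) ^ 2) - c * (1 - y t) ^ 2 with hF
  have hF0 : F 0 = 0 := by simp only [hF, hx0, hy0, ha, hc]; ring
  have hFd : ∀ t ≥ (0:ℝ), HasDerivAt F (-2 * x t * F t) t := by
    intro t ht
    have h1 := hdx t ht
    have h2 := hdy t ht
    have hx2' := (h1.pow 2)
    have hy2' := (h2.pow 2)
    have : HasDerivAt F
        (a * ((2 : ℕ) * x t ^ 1 * (-(x t)^2 - κ * y t)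
          + κ * ((2 : ℕ) * y t ^ 1 * (x t * (1 - y t))))
          - c * ((2 : ℕ) * (1 - y t) ^ 1 * (0 - x t * (1 - y t)))) t := by
      apply HasDerivAt.sub
      · exact (hx2'.add (hy2'.const_mul κ)).const_mul a
      · exact (((hasDerivAt_const t (1:ℝ)).sub h2).pow 2).const_mul c
    convert this using 1
    simp only [hF]
    push_cast
    ring
  -- F vanishes identically (Gronwall)
  have hFzero : ∀ t ≥ (0:ℝ), F t = 0 := by
    intro T hT
    -- bound x on [0, T]
    have hxc : ContinuousOn x (Set.Icc 0 T) := fun t ht =>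
      ((hdx t ht.1).continuousAt).continuousWithinAt
    obtain ⟨K, hK⟩ := (isCompact_Icc.exists_bound_of_continuousOn hxc)
    have hK0 : 0 ≤ K := le_trans (abs_nonneg _) (by simpa using hK 0 ⟨le_refl 0, hT⟩)
    have hFc : ContinuousOn F (Set.Icc 0 T) := fun t ht =>
      ((hFd t ht.1).continuousAt).continuousWithinAt
    have h := norm_le_gronwallBound_of_norm_deriv_right_le (f := F)
      (f' := fun t => -2 * x t * F t) (δ := 0) (K := 2 * K) (ε := 0) (a := 0) (b := T)
      hFc
      (fun s hs => ((hFd s hs.1).hasDerivWithinAt))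
      (by simp [hF0])
      (fun s hs => by
        have hxs : |x s| ≤ K := by simpa using hK s ⟨hs.1, hs.2.le⟩
        have : ‖-2 * x s * F s‖ = 2 * |x s| * ‖F s‖ := by
          simp [Real.norm_eq_abs, abs_mul]
        rw [this]
        have : 2 * |x s| * ‖F s‖ ≤ 2 * K * ‖F s‖ := by
          apply mul_le_mul_of_nonneg_right (by linarith) (norm_nonneg _)
        linarith)
      T ⟨hT, le_refl T⟩
    rw [gronwallBound_ε0_δ0] at h
    have : ‖F T‖ = 0 := le_antisymm h (norm_nonneg _)
    simpa using this
  -- from F t = 0 deduce the bound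
  refine ⟨2 * (κ * a) / (κ * a - c), by positivity, fun t ht => ?_⟩
  have hFt := hFzero t ht
  set u : ℝ := 1 - y t with hu
  have hyu : y t = 1 - u := by rw [hu]; ring
  have hineq : κ * a * (1 - u) ^ 2 ≤ c * u ^ 2 := by
    have : a * ((x t) ^ 2 + κ * (y t) ^ 2) = c * (1 - y t) ^ 2 := by
      have := hFt; simp only [hF] at this; linarith
    have hxt : 0 ≤ (x t) ^ 2 := sq_nonneg _
    have ha0 : 0 ≤ a := sq_nonneg _
    rw [hyu] at this
    nlinarith [mul_nonneg ha0 hxt]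
  -- u > 0
  have hupos : 0 < u := by nlinarith [sq_nonneg (1 - u), sq_nonneg u]
  -- (κa - c) u² ≤ κa (2u - 1) ≤ 2 κa u, so u ≤ 2κa/(κa-c)
  have hub : u ≤ 2 * (κ * a) / (κ * a - c) := by
    rw [le_div_iff₀ hd]
    nlinarith
  rw [abs_of_pos hupos]
  exact hub

/-- Under the subcritical thresholds for both `(p,μ)` and `(q,ν)`, the density
`ρ = (1−μ)(1−ν)^{n−1}` remains bounded above uniformly in time. -/
theorem stmt_18 (n : ℕ) (κ p₀ q₀ μ₀ ν₀ : ℝ) (hκ : 0 < κ)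
    (hp : |p₀| < Real.sqrt (κ * (1 - 2 * μ₀)))
    (hq : |q₀| < Real.sqrt (κ * (1 - 2 * ν₀)))
    (p μ q ν : ℝ → ℝ)
    (hdp : ∀ t ≥ (0:ℝ), HasDerivAt p (-(p t)^2 - κ * μ t) t)
    (hdμ : ∀ t ≥ (0:ℝ), HasDerivAt μ (p t * (1 - μ t)) t)
    (hdq : ∀ t ≥ (0:ℝ), HasDerivAt q (-(q t)^2 - κ * ν t) t)
    (hdν : ∀ t ≥ (0:ℝ), HasDerivAt ν (q t * (1 - ν t)) t)
    (hp0 : p 0 = p₀) (hμ0 : μ 0 = μ₀) (hq0 : q 0 = q₀) (hν0 : ν 0 = ν₀) :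
    ∃ M : ℝ, ∀ t ≥ (0:ℝ), (1 - μ t) * (1 - ν t) ^ (n - 1) ≤ M := by
  obtain ⟨M₁, hM₁0, hM₁⟩ := key_bound κ p₀ μ₀ hκ hp p μ hdp hdμ hp0 hμ0
  obtain ⟨M₂, hM₂0, hM₂⟩ := key_bound κ q₀ ν₀ hκ hq q ν hdq hdν hq0 hν0
  refine ⟨M₁ * M₂ ^ (n - 1), fun t ht => ?_⟩
  calc (1 - μ t) * (1 - ν t) ^ (n - 1)
      ≤ |(1 - μ t) * (1 - ν t) ^ (n - 1)| := le_abs_self _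
    _ = |1 - μ t| * |1 - ν t| ^ (n - 1) := by rw [abs_mul, abs_pow]
    _ ≤ M₁ * M₂ ^ (n - 1) := by
        apply mul_le_mul (hM₁ t ht) (pow_le_pow_left₀ (abs_nonneg _) (hM₂ t ht) _)
          (pow_nonneg (abs_nonneg _) _) hM₁0
end

section
/- Let κ > 0, λ_φ, λᵤ ∈ ℝ with λᵤ² ≥ κ(1 − 2λ_φ) and λ_φ < 1. Then the function g(t) = (1 − λ_φ) + λ_φ cos(√κ t) + λᵤ sin(√κ t)/√κ vanishes at some finite time t > 0. -/
/-- Supercritical geometric criterion: if `λᵤ² ≥ κ(1 − 2lphi)` and `lphi < 1`, then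
`g(t) = (1−lphi) + lphi cos(√κ t) + λᵤ sin(√κ t)/√κ` vanishes at some finite `t > 0`. -/
theorem stmt_19 (κ lphi lu : ℝ) (hκ : 0 < κ) (hlphi : lphi < 1)
    (hsup : κ * (1 - 2 * lphi) ≤ lu^2) :
    ∃ t > (0:ℝ), (1 - lphi) + lphi * Real.cos (Real.sqrt κ * t)
      + lu * Real.sin (Real.sqrt κ * t) / Real.sqrt κ = 0 := by
  have hsq : 0 < Real.sqrt κ := Real.sqrt_pos.mpr hκ
  set b : ℝ := lu / Real.sqrt κ with hbdef
  have hb2 : b ^ 2 = lu ^ 2 / κ := by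
    rw [hbdef, div_pow, Real.sq_sqrt hκ.le]
  have hbb : 1 - 2 * lphi ≤ b ^ 2 := by
    rw [hb2, le_div_iff₀ hκ]; linarith [hsup]
  set R : ℝ := Real.sqrt (lphi ^ 2 + b ^ 2) with hRdef
  have hRsq : R ^ 2 = lphi ^ 2 + b ^ 2 := Real.sq_sqrt (by positivity)
  have hR1 : 1 - lphi ≤ R := by
    have h1 : (1 - lphi) ^ 2 ≤ lphi ^ 2 + b ^ 2 := by nlinarith
    calc 1 - lphi = Real.sqrt ((1 - lphi) ^ 2) := (Real.sqrt_sq (by linarith)).symm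
      _ ≤ R := Real.sqrt_le_sqrt h1
  have hRpos : 0 < R := lt_of_lt_of_le (by linarith) hR1
  have habs : |lphi| ≤ R := by
    calc |lphi| = Real.sqrt (lphi ^ 2) := (Real.sqrt_sq_eq_abs lphi).symm
      _ ≤ R := Real.sqrt_le_sqrt (by nlinarith)
  have hx1 : -1 ≤ -lphi / R := by
    rw [le_div_iff₀ hRpos]
    have := (abs_le.mp habs).2
    linarith
  have hx2 : -lphi / R ≤ 1 := by
    rw [div_le_one hRpos]
    have := (abs_le.mp habs).1
    linarith
  have hxsin : Real.sqrt (1 - (-lphi / R) ^ 2) = |b| / R := by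
    have he : 1 - (-lphi / R) ^ 2 = (|b| / R) ^ 2 := by
      rw [div_pow, div_pow, sq_abs]
      field_simp
      nlinarith [hRsq]
    rw [he, Real.sqrt_sq (by positivity)]
  obtain ⟨θ, hθ0, hcos, hsin⟩ :
      ∃ θ, 0 ≤ θ ∧ Real.cos θ = -lphi / R ∧ Real.sin θ = -b / R := by
    rcases le_or_gt b 0 with hb | hb
    · refine ⟨Real.arccos (-lphi / R), Real.arccos_nonneg _, Real.cos_arccos hx1 hx2, ?_⟩
      rw [Real.sin_arccos, hxsin, abs_of_nonpos hb]
    · refine ⟨2 * Real.pi - Real.arccos (-lphi / R), ?_, ?_, ?_⟩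
      · have := Real.arccos_le_pi (-lphi / R)
        linarith [Real.pi_pos]
      · rw [Real.cos_sub, Real.cos_two_pi, Real.sin_two_pi,
          Real.cos_arccos hx1 hx2]; ring
      · rw [Real.sin_sub, Real.cos_two_pi, Real.sin_two_pi,
          Real.sin_arccos, hxsin, abs_of_pos hb]; ring
  set F : ℝ → ℝ := fun s => (1 - lphi) + lphi * Real.cos s + b * Real.sin s with hF
  have hFθ : F θ ≤ 0 := by
    have : F θ = (1 - lphi) - R := by
      simp only [hF, hcos, hsin]
      field_simp
      nlinarith [hRsq]
    linarith [this, hR1]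
  have hF0 : F 0 = 1 := by simp [hF]
  have hcont : ContinuousOn F (Set.Icc 0 θ) := by fun_prop
  have hsub := intermediate_value_Icc' hθ0 hcont
  have h0mem : (0 : ℝ) ∈ Set.Icc (F θ) (F 0) := by
    constructor
    · exact hFθ
    · rw [hF0]; norm_num
  obtain ⟨s, hs, hFs⟩ := hsub h0mem
  have hspos : 0 < s := by
    rcases lt_or_eq_of_le hs.1 with h | h
    · exact h
    · exfalso; rw [← h] at hFs; rw [hF0] at hFs; norm_num at hFs
  refine ⟨s / Real.sqrt κ, div_pos hspos hsq, ?_⟩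
  rw [mul_div_cancel₀ s hsq.ne']
  have : lu * Real.sin s / Real.sqrt κ = b * Real.sin s := by
    rw [hbdef]; ring
  rw [this]
  exact hFs
end
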